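/- arXiv:1901.08122 — 8 statements merged into one kernel-verified Lean document; each statement's English description precedes it below -/
import Mathlib

section
/- Let Φ be a root system in E with a fixed set of positive roots Φ^+. Every special closed subset of Φ is conjugate under the Weyl group W(Φ) to a subset of Φ^+. -/
open scoped RealInnerProductSpace

/-!
A special closed subset `T` lies in an open half-space. Otherwise `0 = ∑ w_y y` is a convex
combination of elements of `T`, and simultaneous Dirichlet approximation of the weights yields
nonempty sums of elements of `T` of arbitrarily small norm. But in such a sum two summands with
negative inner product can be merged into their sum, which is again in `T` since `T` is closed
and special; when no such pair is left the sum is at least as long as each summand. So some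
functional `g` is positive on `T`. Reflecting in a simple root `δ` with `g δ < 0` decreases the
number of positive roots on which `g` is negative, so some `w ∈ W` makes `g ∘ w` nonnegative on
the simple roots, hence on `Φ⁺`, and then `w⁻¹` maps `T` into `Φ⁺`.
-/

/-- The reflection determined by a root `α`: `s_α(x) = x - (2(x,α)/(α,α)) α`. -/
noncomputable def reflectRoot {E : Type*} [NormedAddCommGroup E] [InnerProductSpace ℝ E] (α x : E) : E :=
  x - (2 * ⟪x, α⟫ / ⟪α, α⟫) • α

/-- A root system in a finite-dimensional real inner product space. -/
def IsRootSystem {E : Type*} [NormedAddCommGroup E] [InnerProductSpace ℝ E] (Φ : Set E) : Prop :=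
  Φ.Finite ∧ Submodule.span ℝ Φ = ⊤ ∧ (0 : E) ∉ Φ ∧
    (∀ α ∈ Φ, ∀ t : ℝ, t • α ∈ Φ → t • α = α ∨ t • α = -α) ∧
    (∀ α ∈ Φ, ∀ β ∈ Φ, reflectRoot α β ∈ Φ) ∧
    (∀ α ∈ Φ, ∀ β ∈ Φ, ∃ n : ℤ, 2 * ⟪β, α⟫ / ⟪α, α⟫ = (n : ℝ))

/-- `T` is a closed subset of the root system `Φ`. -/
def IsClosedSub {E : Type*} [AddCommGroup E] (Φ T : Set E) : Prop :=
  T ⊆ Φ ∧ ∀ α ∈ T, ∀ β ∈ T, α + β ∈ Φ → α + β ∈ T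

/-- The symmetric part `T^r = {α ∈ T | -α ∈ T}`. -/
def symmPart {E : Type*} [AddCommGroup E] (T : Set E) : Set E := {α ∈ T | -α ∈ T}

/-- The special part `T^u = {α ∈ T | -α ∉ T}`. -/
def specPart {E : Type*} [AddCommGroup E] (T : Set E) : Set E := {α ∈ T | -α ∉ T}

/-- `T + T`: elements of `T` that are sums of two elements of `T`. -/
def sumSet {E : Type*} [AddCommGroup E] (T : Set E) : Set E :=
  {γ ∈ T | ∃ α ∈ T, ∃ β ∈ T, γ = α + β}

/-- The Weyl group of `Φ`: the subgroup of linear automorphisms of `E` generated by the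
reflections in the roots. -/
def weylGroup {E : Type*} [NormedAddCommGroup E] [InnerProductSpace ℝ E] (Φ : Set E) :
    Subgroup (E ≃ₗ[ℝ] E) :=
  Subgroup.closure {w | ∃ α ∈ Φ, ∀ x, w x = reflectRoot α x}

/-- `Φp` is a set of positive roots of `Φ`. -/
def IsPositiveSystem {E : Type*} [NormedAddCommGroup E] [InnerProductSpace ℝ E]
    (Φ Φp : Set E) : Prop :=
  ∃ f : E →ₗ[ℝ] ℝ, (∀ α ∈ Φ, f α ≠ 0) ∧ Φp = {α ∈ Φ | 0 < f α}

section Reflection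

variable {E : Type*} [NormedAddCommGroup E] [InnerProductSpace ℝ E]

lemma reflectRoot_self {α : E} (hα : α ≠ 0) : reflectRoot α α = -α := by
  have hαα : ⟪α, α⟫ ≠ 0 := (real_inner_self_pos.2 hα).ne'
  rw [reflectRoot, mul_div_assoc, div_self hαα, mul_one, two_smul]
  abel

lemma reflectRoot_neg (α x : E) : reflectRoot α (-x) = -reflectRoot α x := by
  simp only [reflectRoot, inner_neg_left, mul_neg, neg_div, neg_smul, sub_neg_eq_add]
  abel

noncomputable def coroot (α : E) : E →ₗ[ℝ] ℝ := (2 / ⟪α, α⟫) • innerₗ E α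

lemma coroot_apply (α x : E) : coroot α x = 2 * ⟪x, α⟫ / ⟪α, α⟫ := by
  simp only [coroot, LinearMap.smul_apply, innerₗ_apply_apply, smul_eq_mul, real_inner_comm α x]
  ring

lemma coroot_self {α : E} (hα : α ≠ 0) : coroot α α = 2 := by
  rw [coroot_apply, mul_div_assoc, div_self (real_inner_self_pos.2 hα).ne', mul_one]

noncomputable def rootReflection {α : E} (hα : α ≠ 0) : E ≃ₗ[ℝ] E :=
  Module.reflection (coroot_self hα)

lemma rootReflection_apply {α : E} (hα : α ≠ 0) (x : E) :
    rootReflection hα x = reflectRoot α x := by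
  rw [rootReflection, Module.reflection_apply, coroot_apply, reflectRoot]

lemma reflectRoot_reflectRoot {α : E} (hα : α ≠ 0) (x : E) :
    reflectRoot α (reflectRoot α x) = x := by
  simpa only [rootReflection, ← rootReflection_apply hα] using
    Module.involutive_reflection (coroot_self hα) x

lemma rootReflection_mem_weylGroup {Φ : Set E} {α : E} (hαΦ : α ∈ Φ) (hα : α ≠ 0) :
    rootReflection hα ∈ weylGroup Φ :=
  Subgroup.subset_closure ⟨α, hαΦ, rootReflection_apply hα⟩

end Reflection

namespace IsRootSystem

variable {E : Type*} [NormedAddCommGroup E] [InnerProductSpace ℝ E] {Φ : Set E} {α β : E}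

lemma ne_zero (hΦ : IsRootSystem Φ) (hα : α ∈ Φ) : α ≠ 0 :=
  fun h => hΦ.2.2.1 (h ▸ hα)

lemma reflectRoot_mem (hΦ : IsRootSystem Φ) (hα : α ∈ Φ) (hβ : β ∈ Φ) :
    reflectRoot α β ∈ Φ :=
  hΦ.2.2.2.2.1 α hα β hβ

lemma neg_mem (hΦ : IsRootSystem Φ) (hα : α ∈ Φ) : -α ∈ Φ := by
  simpa only [reflectRoot_self (hΦ.ne_zero hα)] using hΦ.reflectRoot_mem hα hα

lemma exists_coroot_eq_intCast (hΦ : IsRootSystem Φ) (hα : α ∈ Φ) (hβ : β ∈ Φ) :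
    ∃ n : ℤ, coroot α β = n := by
  simpa only [coroot_apply] using hΦ.2.2.2.2.2 α hα β hβ

lemma smul_mem_eq_or_eq_neg (hΦ : IsRootSystem Φ) (hα : α ∈ Φ) {t : ℝ} (ht : t • α ∈ Φ) :
    t • α = α ∨ t • α = -α :=
  hΦ.2.2.2.1 α hα t ht

lemma two_smul_notMem (hΦ : IsRootSystem Φ) (hα : α ∈ Φ) : (2 : ℝ) • α ∉ Φ := by
  intro h
  apply hΦ.ne_zero hα
  rcases hΦ.smul_mem_eq_or_eq_neg hα h with h2 | h2
  · simpa [two_smul] using h2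
  · have : (3 : ℝ) • α = 0 := by rw [show (3 : ℝ) = 2 + 1 by norm_num, add_smul, h2]; simp
    simpa using this

open scoped Pointwise in
lemma mapsTo_of_mem_weylGroup (hΦ : IsRootSystem Φ) {w : E ≃ₗ[ℝ] E} (hw : w ∈ weylGroup Φ) :
    Set.MapsTo w Φ Φ := by
  suffices weylGroup Φ ≤ MulAction.stabilizer (E ≃ₗ[ℝ] E) Φ from
    fun x hx => (MulAction.mem_stabilizer_iff.1 (this hw)) ▸ Set.smul_mem_smul_set hx
  refine Subgroup.closure_le _ |>.2 ?_
  rintro s ⟨α, hα, hs⟩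
  refine MulAction.mem_stabilizer_iff.2 (Set.Subset.antisymm ?_ fun x hx => ?_)
  · rintro _ ⟨x, hx, rfl⟩
    simpa only [LinearEquiv.smul_def, hs] using hΦ.reflectRoot_mem hα hx
  · refine ⟨reflectRoot α x, hΦ.reflectRoot_mem hα hx, ?_⟩
    simp only [LinearEquiv.smul_def, hs, reflectRoot_reflectRoot (hΦ.ne_zero hα)]

/-- Equality in Cauchy–Schwarz would make `β` a multiple of `α`, hence `±α`. -/
lemma inner_mul_inner_lt (hΦ : IsRootSystem Φ) (hα : α ∈ Φ) (hβ : β ∈ Φ) (hβα : β ≠ α)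
    (hβα' : β ≠ -α) : ⟪α, β⟫ * ⟪α, β⟫ < ⟪α, α⟫ * ⟪β, β⟫ := by
  refine (real_inner_mul_inner_self_le α β).lt_of_ne fun h => ?_
  have habs : ‖⟪α, β⟫‖ = ‖α‖ * ‖β‖ := by
    rw [Real.norm_eq_abs, ← sq_eq_sq₀ (abs_nonneg _) (by positivity), sq_abs, mul_pow,
      ← real_inner_self_eq_norm_sq, ← real_inner_self_eq_norm_sq, sq, h]
  obtain ⟨r, -, rfl⟩ := (norm_inner_eq_norm_iff (hΦ.ne_zero hα) (hΦ.ne_zero hβ)).1 habs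
  exact (hΦ.smul_mem_eq_or_eq_neg hα hβ).elim hβα hβα'

lemma add_mem_of_inner_neg (hΦ : IsRootSystem Φ) (hα : α ∈ Φ) (hβ : β ∈ Φ)
    (hin : ⟪α, β⟫ < 0) (hne : α + β ≠ 0) : α + β ∈ Φ := by
  have hαα := real_inner_self_pos.2 (hΦ.ne_zero hα)
  have hββ := real_inner_self_pos.2 (hΦ.ne_zero hβ)
  have hcs := hΦ.inner_mul_inner_lt hα hβ (by rintro rfl; linarith)
    (by rintro rfl; exact hne (add_neg_cancel α))
  obtain ⟨n, hn⟩ := hΦ.exists_coroot_eq_intCast hα hβ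
  obtain ⟨m, hm⟩ := hΦ.exists_coroot_eq_intCast hβ hα
  rw [coroot_apply] at hn hm
  rw [real_inner_comm α β] at hn
  have hn0 : (n : ℝ) < 0 := hn ▸ div_neg_of_neg_of_pos (by linarith) hαα
  have hm0 : (m : ℝ) < 0 := hm ▸ div_neg_of_neg_of_pos (by linarith) hββ
  have hnm : (n : ℝ) * m < 4 := by
    rw [← hn, ← hm, div_mul_div_comm, div_lt_iff₀ (by positivity)]
    nlinarith
  have hnm' : n = -1 ∨ m = -1 := by
    have : n < 0 := by exact_mod_cast hn0
    have : m < 0 := by exact_mod_cast hm0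
    have : n * m < 4 := by exact_mod_cast hnm
    by_contra! h
    nlinarith [show n ≤ -2 by omega, show m ≤ -2 by omega]
  rcases hnm' with rfl | rfl
  · have := hΦ.reflectRoot_mem hα hβ
    rwa [reflectRoot, real_inner_comm α β, hn, Int.cast_neg, Int.cast_one, neg_one_smul,
      sub_neg_eq_add, add_comm] at this
  · have := hΦ.reflectRoot_mem hβ hα
    rwa [reflectRoot, hm, Int.cast_neg, Int.cast_one, neg_one_smul, sub_neg_eq_add] at this

lemma sub_mem_of_inner_pos (hΦ : IsRootSystem Φ) (hα : α ∈ Φ) (hβ : β ∈ Φ)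
    (hin : 0 < ⟪α, β⟫) (hne : α ≠ β) : α - β ∈ Φ := by
  rw [sub_eq_add_neg]
  exact hΦ.add_mem_of_inner_neg hα (hΦ.neg_mem hβ) (by rwa [inner_neg_right, neg_lt_zero])
    (by rwa [← sub_eq_add_neg, sub_ne_zero])

end IsRootSystem

section Approximation

variable {F : Type*} [NormedAddCommGroup F] [NormedSpace ℝ F]

lemma exists_add_le_dist_lt {X : Type*} [PseudoMetricSpace X] [ProperSpace X] {x : ℕ → X}
    {s : Set X} (hs : Bornology.IsBounded s) (hx : ∀ n, x n ∈ s) (k : ℕ) {ε : ℝ} (hε : 0 < ε) :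
    ∃ n n', n + k ≤ n' ∧ dist (x n') (x n) < ε := by
  obtain ⟨_, _, φ, hφ, hlim⟩ := tendsto_subseq_of_bounded hs hx
  obtain ⟨N, hN⟩ := Metric.cauchySeq_iff'.1 hlim.cauchySeq ε hε
  exact ⟨φ N, φ (k + N), hφ.add_le_nat k N |>.trans_eq' (add_comm _ _),
    hN (k + N) (Nat.le_add_left N k)⟩

lemma sum_floor_sub_floor_pos {ι : Type*} {s : Finset ι} {w : ι → ℝ} (hw₀ : ∀ y ∈ s, 0 ≤ w y)
    (hw₁ : ∑ y ∈ s, w y = 1) {n n' : ℕ} (hnn' : n + s.card ≤ n') :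
    0 < ∑ y ∈ s, (⌊n' * w y⌋₊ - ⌊n * w y⌋₊) := by
  have hs : s.Nonempty := Finset.nonempty_of_sum_ne_zero (hw₁ ▸ one_ne_zero)
  have hnle : (n : ℝ) ≤ n' := by exact_mod_cast (Nat.le_add_right n _).trans hnn'
  have hcard : (s.card : ℝ) ≤ n' - n := by
    rw [le_sub_iff_add_le']; exact_mod_cast hnn'
  have : (0 : ℝ) < ∑ y ∈ s, ((⌊n' * w y⌋₊ - ⌊n * w y⌋₊ : ℕ) : ℝ) := by
    calc (0 : ℝ) ≤ ∑ y ∈ s, ((n' * w y - 1) - n * w y) := by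
          simp only [Finset.sum_sub_distrib, ← Finset.mul_sum, hw₁, Finset.sum_const,
            nsmul_eq_mul, mul_one]
          linarith
      _ < _ := Finset.sum_lt_sum_of_nonempty hs fun y hy => by
          have h₀ : 0 ≤ n * w y := mul_nonneg n.cast_nonneg (hw₀ y hy)
          rw [Nat.cast_sub (Nat.floor_le_floor (mul_le_mul_of_nonneg_right hnle (hw₀ y hy)))]
          linarith [Nat.sub_one_lt_floor (n' * w y), Nat.floor_le h₀]
  exact_mod_cast this

/-- `∑ ⌊n w_y⌋₊ • y` differs from `∑ n w_y • y = 0` by a combination with coefficients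
in `(-1, 0]`. -/
lemma norm_sum_floor_smul_le {s : Finset F} {w : F → ℝ} (hw₀ : ∀ y ∈ s, 0 ≤ w y)
    (hws : ∑ y ∈ s, w y • y = 0) (n : ℕ) :
    ‖∑ y ∈ s, ⌊n * w y⌋₊ • y‖ ≤ ∑ y ∈ s, ‖y‖ := by
  have : ∑ y ∈ s, ⌊n * w y⌋₊ • y = ∑ y ∈ s, ((⌊n * w y⌋₊ : ℝ) - n * w y) • y := by
    simp only [sub_smul, Finset.sum_sub_distrib, mul_smul, ← Finset.smul_sum, hws,
      smul_zero, sub_zero, Nat.cast_smul_eq_nsmul]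
  rw [this]
  refine (norm_sum_le _ _).trans (Finset.sum_le_sum fun y hy => ?_)
  have h₀ : 0 ≤ n * w y := mul_nonneg n.cast_nonneg (hw₀ y hy)
  rw [norm_smul, Real.norm_eq_abs, abs_sub_comm]
  refine mul_le_of_le_one_left (norm_nonneg y) (abs_le.2 ⟨?_, ?_⟩)
  · linarith [Nat.floor_le h₀]
  · linarith [Nat.sub_one_lt_floor (n * w y)]

/-- Simultaneous Dirichlet approximation of the weights `n w_y`, with the pigeonhole principle
replaced by compactness. -/
lemma exists_multiset_norm_sum_lt [ProperSpace F] {s : Finset F} {w : F → ℝ}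
    (hw₀ : ∀ y ∈ s, 0 ≤ w y) (hw₁ : ∑ y ∈ s, w y = 1) (hws : ∑ y ∈ s, w y • y = 0)
    {ε : ℝ} (hε : 0 < ε) :
    ∃ M : Multiset F, M ≠ 0 ∧ (∀ x ∈ M, x ∈ s) ∧ ‖M.sum‖ < ε := by
  set x : ℕ → F := fun n => ∑ y ∈ s, ⌊n * w y⌋₊ • y
  obtain ⟨n, n', hnn', hdist⟩ := exists_add_le_dist_lt Metric.isBounded_closedBall
    (fun n => mem_closedBall_zero_iff.2 (norm_sum_floor_smul_le hw₀ hws n)) s.card hε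
  have hnle : (n : ℝ) ≤ n' := by exact_mod_cast (Nat.le_add_right n _).trans hnn'
  refine ⟨∑ y ∈ s, Multiset.replicate (⌊n' * w y⌋₊ - ⌊n * w y⌋₊) y, ?_, ?_, ?_⟩
  · rw [← Multiset.card_pos, Multiset.card_sum]
    simpa only [Multiset.card_replicate] using sum_floor_sub_floor_pos hw₀ hw₁ hnn'
  · intro z hz
    obtain ⟨y, hy, hzy⟩ := Multiset.mem_sum.1 hz
    rwa [Multiset.eq_of_mem_replicate hzy]
  · have : (∑ y ∈ s, Multiset.replicate (⌊n' * w y⌋₊ - ⌊n * w y⌋₊) y).sum = x n' - x n := by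
      simp only [Multiset.sum_sum, Multiset.sum_replicate, x, ← Finset.sum_sub_distrib]
      refine Finset.sum_congr rfl fun y hy => ?_
      rw [eq_sub_iff_add_eq, ← add_nsmul, Nat.sub_add_cancel
        (Nat.floor_le_floor (mul_le_mul_of_nonneg_right hnle (hw₀ y hy)))]
    rwa [this, ← dist_eq_norm]

end Approximation

namespace IsClosedSub

variable {E : Type*} [NormedAddCommGroup E] [InnerProductSpace ℝ E] {Φ T : Set E}

/-- Merging two summands with negative inner product into their sum, which lies in `T`,
shortens the multiset without changing its sum; once no such pair is left, the sum is at
least as long as any of its summands. -/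
lemma exists_norm_le_norm_sum (hT : IsClosedSub Φ T) (hΦ : IsRootSystem Φ)
    (hspec : ∀ α ∈ T, -α ∉ T) {M : Multiset E} (hM : M ≠ 0) (hMT : ∀ x ∈ M, x ∈ T) :
    ∃ γ ∈ T, ‖γ‖ ≤ ‖M.sum‖ := by
  induction hk : Multiset.card M using Nat.strong_induction_on generalizing M with
  | _ k ih =>
  obtain ⟨a, ha⟩ := Multiset.exists_mem_of_ne_zero hM
  obtain ⟨M₁, rfl⟩ := Multiset.exists_cons_of_mem ha
  have haT : a ∈ T := hMT a (Multiset.mem_cons_self a M₁)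
  by_cases hneg : ∃ b ∈ M₁, ⟪a, b⟫ < 0
  · obtain ⟨b, hb, hab⟩ := hneg
    obtain ⟨M₂, rfl⟩ := Multiset.exists_cons_of_mem hb
    have hbT : b ∈ T := hMT b (by simp)
    have hab₀ : a + b ≠ 0 := fun h => hspec a haT (neg_eq_of_add_eq_zero_right h ▸ hbT)
    have habT : a + b ∈ T :=
      hT.2 a haT b hbT (hΦ.add_mem_of_inner_neg (hT.1 haT) (hT.1 hbT) hab hab₀)
    obtain ⟨γ, hγT, hγ⟩ := ih _ (by simp [← hk]) (M := (a + b) ::ₘ M₂) (Multiset.cons_ne_zero)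
      (fun x hx => (Multiset.mem_cons.1 hx).elim (· ▸ habT) fun hx => hMT x (by simp [hx])) rfl
    exact ⟨γ, hγT, by simpa [add_assoc] using hγ⟩
  · push Not at hneg
    have hinner : 0 ≤ ⟪a, M₁.sum⟫ := by
      rw [← innerₗ_apply_apply, map_multiset_sum]
      exact Multiset.sum_nonneg fun x hx => by
        obtain ⟨b, hb, rfl⟩ := Multiset.mem_map.1 hx
        exact hneg b hb
    refine ⟨a, haT, ?_⟩
    rw [Multiset.sum_cons, ← sq_le_sq₀ (norm_nonneg _) (norm_nonneg _), norm_add_sq_real]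
    nlinarith [sq_nonneg ‖M₁.sum‖]

lemma zero_notMem_convexHull [FiniteDimensional ℝ E] (hT : IsClosedSub Φ T)
    (hΦ : IsRootSystem Φ) (hspec : ∀ α ∈ T, -α ∉ T) : (0 : E) ∉ convexHull ℝ T := by
  have hTfin : T.Finite := hΦ.1.subset hT.1
  rw [← hTfin.coe_toFinset, Finset.mem_convexHull']
  rintro ⟨w, hw₀, hw₁, hws⟩
  have hne : T.Nonempty :=
    hTfin.toFinset_nonempty.1 (Finset.nonempty_of_sum_ne_zero (hw₁ ▸ one_ne_zero))
  obtain ⟨γ₀, hγ₀, hmin⟩ := T.exists_min_image norm hTfin hne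
  obtain ⟨M, hM, hMT, hMlt⟩ := exists_multiset_norm_sum_lt hw₀ hw₁ hws
    (norm_pos_iff.2 (hΦ.ne_zero (hT.1 hγ₀)))
  obtain ⟨γ, hγT, hγ⟩ := hT.exists_norm_le_norm_sum hΦ hspec hM (by simpa using hMT)
  linarith [hmin γ hγT]

end IsClosedSub

lemma exists_pos_of_zero_notMem_convexHull {F : Type*} [NormedAddCommGroup F]
    [NormedSpace ℝ F] {T : Set F} (hT : T.Finite) (h : (0 : F) ∉ convexHull ℝ T) :
    ∃ g : F →L[ℝ] ℝ, ∀ t ∈ T, 0 < g t := by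
  obtain ⟨g, u, hg₀, hgT⟩ := geometric_hahn_banach_point_closed (convex_convexHull ℝ T)
    (hT.isCompact_convexHull (𝕜 := ℝ)).isClosed h
  rw [map_zero] at hg₀
  exact ⟨g, fun t ht => hg₀.trans (hgT t (subset_convexHull ℝ T ht))⟩

section PositiveRoots

variable {E : Type*} [NormedAddCommGroup E] [InnerProductSpace ℝ E]

def posRoots (Φ : Set E) (f : E →ₗ[ℝ] ℝ) : Set E := {α ∈ Φ | 0 < f α}

def simpleRoots (Φ : Set E) (f : E →ₗ[ℝ] ℝ) : Set E :=
  {α ∈ posRoots Φ f | ∀ β ∈ posRoots Φ f, ∀ γ ∈ posRoots Φ f, α ≠ β + γ}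

def posRootsNeg (Φ : Set E) (f g : E →ₗ[ℝ] ℝ) : Set E := {β ∈ posRoots Φ f | g β < 0}

variable {Φ : Set E} {f : E →ₗ[ℝ] ℝ} {α β γ δ : E}

lemma neg_mem_posRoots (hΦ : IsRootSystem Φ) (hf : ∀ α ∈ Φ, f α ≠ 0) (hα : α ∈ Φ)
    (h : α ∉ posRoots Φ f) : -α ∈ posRoots Φ f := by
  refine ⟨hΦ.neg_mem hα, ?_⟩
  rw [map_neg, neg_pos]
  exact (hf α hα).lt_of_le (not_lt.1 fun h' => h ⟨hα, h'⟩)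

lemma nonneg_of_nonneg_on_simpleRoots (hfin : Φ.Finite) {g : E →ₗ[ℝ] ℝ}
    (hg : ∀ δ ∈ simpleRoots Φ f, 0 ≤ g δ) (hβ : β ∈ posRoots Φ f) : 0 ≤ g β := by
  by_contra! hgβ
  -- A counterexample `β` with `f β` minimal cannot be simple, but cannot decompose either.
  obtain ⟨β, ⟨hβ, hgβ⟩, hmin⟩ := Set.exists_min_image {β ∈ posRoots Φ f | g β < 0} f
    (hfin.subset fun β h => h.1.1) ⟨β, hβ, hgβ⟩
  have : ¬ ∀ β₁ ∈ posRoots Φ f, ∀ β₂ ∈ posRoots Φ f, β ≠ β₁ + β₂ :=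
    fun h => hgβ.not_ge (hg β ⟨hβ, h⟩)
  push Not at this
  obtain ⟨β₁, hβ₁, β₂, hβ₂, rfl⟩ := this
  have h₁ : 0 ≤ g β₁ := not_lt.1 fun h => (hmin β₁ ⟨hβ₁, h⟩).not_gt (by simp [hβ₂.2])
  have h₂ : 0 ≤ g β₂ := not_lt.1 fun h => (hmin β₂ ⟨hβ₂, h⟩).not_gt (by simp [hβ₁.2])
  rw [map_add] at hgβ
  linarith

lemma sub_mem_posRoots (hΦ : IsRootSystem Φ) (hf : ∀ α ∈ Φ, f α ≠ 0)
    (hδ : δ ∈ simpleRoots Φ f) (hβ : β ∈ posRoots Φ f) (hβδ : β - δ ∈ Φ) :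
    β - δ ∈ posRoots Φ f := by
  by_contra h
  exact hδ.2 β hβ _ (by simpa using neg_mem_posRoots hΦ hf hβδ h) (by abel)

/-- Subtracting `δ` from a summand having positive inner product with `δ` lowers `n`. -/
lemma natCast_smul_ne_add (hΦ : IsRootSystem Φ) (hf : ∀ α ∈ Φ, f α ≠ 0)
    (hδ : δ ∈ simpleRoots Φ f) (n : ℕ) (hβ : β ∈ posRoots Φ f) (hγ : γ ∈ posRoots Φ f)
    (hβδ : β ≠ δ) (hγδ : γ ≠ δ) : (n : ℝ) • δ ≠ β + γ := by
  induction n generalizing β γ with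
  | zero =>
    intro h
    have := congrArg f h
    simp only [Nat.cast_zero, zero_smul, map_zero, map_add] at this
    linarith [hβ.2, hγ.2]
  | succ n ih =>
    intro h
    wlog hin : 0 < ⟪β, δ⟫ generalizing β γ
    · refine this hγ hβ hγδ hβδ (h.trans (add_comm β γ)) ?_
      have hδδ := real_inner_self_pos.2 (hΦ.ne_zero hδ.1.1)
      have : ⟪β, δ⟫ + ⟪γ, δ⟫ = (n + 1) * ⟪δ, δ⟫ := by
        rw [← inner_add_left, ← h, real_inner_smul_left, Nat.cast_succ]
      nlinarith
    have hsub := hΦ.sub_mem_of_inner_pos hβ.1 hδ.1.1 hin hβδ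
    refine ih (sub_mem_posRoots hΦ hf hδ hβ hsub) hγ ?_ hγδ ?_
    · intro h2
      exact hΦ.two_smul_notMem hδ.1.1 (by rw [two_smul, ← sub_eq_iff_eq_add.1 h2]; exact hβ.1)
    · rw [Nat.cast_succ, add_smul, one_smul] at h
      rw [sub_add_eq_add_sub, ← h, add_sub_cancel_right]

lemma reflectRoot_mem_posRoots (hΦ : IsRootSystem Φ) (hf : ∀ α ∈ Φ, f α ≠ 0)
    (hδ : δ ∈ simpleRoots Φ f) (hβ : β ∈ posRoots Φ f) (hβδ : β ≠ δ) :
    reflectRoot δ β ∈ posRoots Φ f := by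
  by_contra h
  have hγ := neg_mem_posRoots hΦ hf (hΦ.reflectRoot_mem hδ.1.1 hβ.1) h
  obtain ⟨n, hn⟩ := hΦ.exists_coroot_eq_intCast hδ.1.1 hβ.1
  have hrel : (n : ℝ) • δ = β + -reflectRoot δ β := by
    rw [reflectRoot, ← coroot_apply, hn]
    abel
  have hn₀ : 0 < n := by
    have := congrArg f hrel
    rw [map_smul, map_add, smul_eq_mul] at this
    exact_mod_cast pos_of_mul_pos_left (this ▸ add_pos hβ.2 hγ.2) hδ.1.2.le
  lift n to ℕ using hn₀.le
  refine natCast_smul_ne_add hΦ hf hδ n hβ hγ hβδ (fun h => hβδ ?_) hrel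
  rw [← reflectRoot_reflectRoot (hΦ.ne_zero hδ.1.1) β, ← neg_neg (reflectRoot δ β), h,
    reflectRoot_neg, reflectRoot_self (hΦ.ne_zero hδ.1.1), neg_neg]

lemma ncard_posRootsNeg_comp_lt (hΦ : IsRootSystem Φ) (hf : ∀ α ∈ Φ, f α ≠ 0)
    {g : E →ₗ[ℝ] ℝ} (hδ : δ ∈ simpleRoots Φ f) (hgδ : g δ < 0) :
    (posRootsNeg Φ f (g ∘ₗ (rootReflection (hΦ.ne_zero hδ.1.1)).toLinearMap)).ncard <
      (posRootsNeg Φ f g).ncard := by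
  have hδ₀ := hΦ.ne_zero hδ.1.1
  set s := rootReflection hδ₀
  have hfin : (posRootsNeg Φ f g).Finite := hΦ.1.subset fun β h => h.1.1
  have hmaps : s '' posRootsNeg Φ f (g ∘ₗ s.toLinearMap) ⊆ posRootsNeg Φ f g \ {δ} := by
    rintro _ ⟨β, ⟨hβ, hgβ⟩, rfl⟩
    simp only [LinearMap.comp_apply, LinearEquiv.coe_coe] at hgβ
    have hβδ : β ≠ δ := by
      rintro rfl
      rw [rootReflection_apply, reflectRoot_self hδ₀, map_neg] at hgβ
      linarith
    refine ⟨⟨rootReflection_apply hδ₀ β ▸ reflectRoot_mem_posRoots hΦ hf hδ hβ hβδ, hgβ⟩, ?_⟩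
    rintro h
    have : β = -δ := by
      rw [← reflectRoot_reflectRoot hδ₀ β, ← rootReflection_apply hδ₀ β, Set.mem_singleton_iff.1 h,
        reflectRoot_self hδ₀]
    linarith [hβ.2, hδ.1.2, congrArg f this, map_neg f δ]
  calc (posRootsNeg Φ f (g ∘ₗ s.toLinearMap)).ncard
      = (s '' posRootsNeg Φ f (g ∘ₗ s.toLinearMap)).ncard :=
        (Set.ncard_image_of_injective _ s.injective).symm
    _ ≤ (posRootsNeg Φ f g \ {δ}).ncard := Set.ncard_le_ncard hmaps hfin.sdiff
    _ < (posRootsNeg Φ f g).ncard := Set.ncard_sdiff_singleton_lt_of_mem ⟨hδ.1, hgδ⟩ hfin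

lemma exists_mem_weylGroup_nonneg_on_simpleRoots (hΦ : IsRootSystem Φ)
    (hf : ∀ α ∈ Φ, f α ≠ 0) (g : E →ₗ[ℝ] ℝ) :
    ∃ w ∈ weylGroup Φ, ∀ δ ∈ simpleRoots Φ f, 0 ≤ g (w δ) := by
  induction hk : (posRootsNeg Φ f g).ncard using Nat.strong_induction_on generalizing g with
  | _ k ih =>
  by_cases h : ∀ δ ∈ simpleRoots Φ f, 0 ≤ g δ
  · exact ⟨1, one_mem _, h⟩
  push Not at h
  obtain ⟨δ, hδ, hgδ⟩ := h
  have hδ₀ := hΦ.ne_zero hδ.1.1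
  obtain ⟨w, hw, hgw⟩ := ih _ (hk ▸ ncard_posRootsNeg_comp_lt hΦ hf hδ hgδ) _ rfl
  exact ⟨rootReflection hδ₀ * w, mul_mem (rootReflection_mem_weylGroup hδ.1.1 hδ₀) hw, hgw⟩

end PositiveRoots

/-- Every special closed subset of `Φ` is conjugate under the Weyl group
to a subset of a fixed set of positive roots `Φp`. -/
theorem special_closed_conjugate_to_subset_of_positives {E : Type*} [NormedAddCommGroup E]
    [InnerProductSpace ℝ E] [FiniteDimensional ℝ E] (Φ Φp T : Set E)
    (hΦ : IsRootSystem Φ) (hΦp : IsPositiveSystem Φ Φp)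
    (hT : IsClosedSub Φ T) (hspec : ∀ α ∈ T, -α ∉ T) :
    ∃ w ∈ weylGroup Φ, ⇑w '' T ⊆ Φp := by
  obtain ⟨f, hf, rfl⟩ := hΦp
  obtain ⟨g, hg⟩ := exists_pos_of_zero_notMem_convexHull (hΦ.1.subset hT.1)
    (hT.zero_notMem_convexHull hΦ hspec)
  obtain ⟨w, hw, hgw⟩ := exists_mem_weylGroup_nonneg_on_simpleRoots hΦ hf (g : E →ₗ[ℝ] ℝ)
  refine ⟨w⁻¹, inv_mem hw, ?_⟩
  rintro _ ⟨t, ht, rfl⟩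
  by_contra hneg
  have hwt := neg_mem_posRoots hΦ hf (hΦ.mapsTo_of_mem_weylGroup (inv_mem hw) (hT.1 ht)) hneg
  have := nonneg_of_nonneg_on_simpleRoots hΦ.1 (g := (g : E →ₗ[ℝ] ℝ) ∘ₗ w.toLinearMap) hgw hwt
  simp only [LinearMap.comp_apply, ContinuousLinearMap.coe_coe, LinearEquiv.coe_coe,
    LinearEquiv.coe_inv, LinearEquiv.apply_symm_apply, map_neg, Left.nonneg_neg_iff] at this
  exact (hg t ht).not_ge this
end

section
/- Let Φ be a root system in E and let T be a nonempty special closed subset of Φ. Then T + T is strictly contained in T, where T + T = {γ ∈ T : γ = α + β for some α, β ∈ T}; that is, there exists a root in T that is not the sum of two elements of T. -/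
open scoped RealInnerProductSpace

/-! If every root of `T` were a sum of two roots of `T`, then choosing for each `γ ∈ T` a
decomposition `γ = α + g γ` and following the (finite) orbit of `g` yields a nonempty family of
roots of `T` summing to `0`. No such family exists: if roots of `T` sum to `0`, two of them, `α`
and `β`, form an obtuse angle; since `T` is special, `β ≠ -α`, so `α + β` is a root, hence lies in
the closed set `T`, and replacing `α, β` by `α + β` gives a shorter such family. -/

section RootSystem

variable {E : Type*} [NormedAddCommGroup E] [InnerProductSpace ℝ E] {Φ : Set E} {α β : E}

lemma reflectRoot_eq_add_of_coeff_eq_neg_one (h : 2 * ⟪β, α⟫ / ⟪α, α⟫ = -1) :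
    reflectRoot α β = β + α := by
  rw [reflectRoot, h, neg_one_smul, sub_neg_eq_add]

lemma IsRootSystem.ne_zero_s3 (hΦ : IsRootSystem Φ) (hα : α ∈ Φ) : α ≠ 0 :=
  fun h => hΦ.2.2.1 (h ▸ hα)

lemma IsRootSystem.inner_self_pos (hΦ : IsRootSystem Φ) (hα : α ∈ Φ) : 0 < ⟪α, α⟫ :=
  real_inner_self_pos.2 (hΦ.ne_zero_s3 hα)

lemma IsRootSystem.eq_neg_of_inner_neg_of_inner_mul_inner_eq (hΦ : IsRootSystem Φ) (hα : α ∈ Φ)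
    (hβ : β ∈ Φ) (hneg : ⟪α, β⟫ < 0) (heq : ⟪α, β⟫ * ⟪α, β⟫ = ⟪α, α⟫ * ⟪β, β⟫) : β = -α := by
  have hnorm : ‖⟪α, β⟫‖ = ‖α‖ * ‖β‖ := by
    rw [Real.norm_eq_abs, ← sq_eq_sq₀ (abs_nonneg _) (by positivity), sq_abs, mul_pow,
      ← real_inner_self_eq_norm_sq, ← real_inner_self_eq_norm_sq, sq, heq]
  obtain ⟨t, -, rfl⟩ := (norm_inner_eq_norm_iff (𝕜 := ℝ) (hΦ.ne_zero_s3 hα) (hΦ.ne_zero_s3 hβ)).1 hnorm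
  rcases hΦ.2.2.2.1 α hα t hβ with h | h
  · rw [h] at hneg
    exact absurd hneg (hΦ.inner_self_pos hα).not_gt
  · exact h

lemma IsRootSystem.add_mem_of_inner_neg_of_inner_mul_inner_lt (hΦ : IsRootSystem Φ)
    (hα : α ∈ Φ) (hβ : β ∈ Φ) (hneg : ⟪α, β⟫ < 0)
    (hlt : ⟪α, β⟫ * ⟪α, β⟫ < ⟪α, α⟫ * ⟪β, β⟫) : α + β ∈ Φ := by
  have hαα := hΦ.inner_self_pos hα
  have hββ := hΦ.inner_self_pos hβ
  obtain ⟨n, hn⟩ := hΦ.2.2.2.2.2 α hα β hβ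
  obtain ⟨m, hm⟩ := hΦ.2.2.2.2.2 β hβ α hα
  have hneg' : ⟪β, α⟫ < 0 := by rwa [real_inner_comm]
  have hn_neg : n < 0 := by
    have : (n : ℝ) < 0 := hn ▸ div_neg_of_neg_of_pos (by linarith) hαα
    exact_mod_cast this
  have hm_neg : m < 0 := by
    have : (m : ℝ) < 0 := hm ▸ div_neg_of_neg_of_pos (by linarith) hββ
    exact_mod_cast this
  -- `n * m = 4 cos² θ` for the angle `θ` between the roots.
  have hnm : n * m < 4 := by
    have : (n : ℝ) * m < 4 := by
      rw [← hn, ← hm, real_inner_comm α β, div_mul_div_comm, div_lt_iff₀ (mul_pos hαα hββ)]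
      linarith
    exact_mod_cast this
  have hone : n = -1 ∨ m = -1 := by
    by_contra! h
    nlinarith [show n ≤ -2 by omega, show m ≤ -2 by omega]
  rcases hone with rfl | rfl
  · simpa [add_comm, reflectRoot_eq_add_of_coeff_eq_neg_one (by exact_mod_cast hn)]
      using hΦ.2.2.2.2.1 α hα β hβ
  · simpa [reflectRoot_eq_add_of_coeff_eq_neg_one (by exact_mod_cast hm)]
      using hΦ.2.2.2.2.1 β hβ α hα

lemma IsRootSystem.eq_neg_or_add_mem_of_inner_neg (hΦ : IsRootSystem Φ) (hα : α ∈ Φ)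
    (hβ : β ∈ Φ) (hneg : ⟪α, β⟫ < 0) : β = -α ∨ α + β ∈ Φ :=
  (real_inner_mul_inner_self_le α β).lt_or_eq.symm.imp
    (hΦ.eq_neg_of_inner_neg_of_inner_mul_inner_eq hα hβ hneg)
    (hΦ.add_mem_of_inner_neg_of_inner_mul_inner_lt hα hβ hneg)

end RootSystem

lemma Multiset.exists_inner_neg_of_inner_sum_neg {E : Type*} [NormedAddCommGroup E]
    [InnerProductSpace ℝ E] {s : Multiset E} {v : E} (h : ⟪v, s.sum⟫ < 0) :
    ∃ x ∈ s, ⟪v, x⟫ < 0 := by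
  by_contra! hs
  refine h.not_ge ?_
  calc 0 ≤ (s.map (⟪v, ·⟫)).sum := Multiset.sum_nonneg fun y hy => by
        obtain ⟨x, hx, rfl⟩ := Multiset.mem_map.1 hy
        exact hs x hx
    _ = ⟪v, s.sum⟫ := (map_multiset_sum (innerₛₗ ℝ v) s).symm

theorem IsClosedSub.multiset_sum_ne_zero {E : Type*} [NormedAddCommGroup E]
    [InnerProductSpace ℝ E] {Φ T : Set E} (hΦ : IsRootSystem Φ) (hT : IsClosedSub Φ T)
    (hspec : ∀ α ∈ T, -α ∉ T) {s : Multiset E} (hsT : ∀ x ∈ s, x ∈ T) (hs : s ≠ 0) :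
    s.sum ≠ 0 := by
  intro hsum
  obtain ⟨α, hα⟩ := Multiset.exists_mem_of_ne_zero hs
  obtain ⟨s', rfl⟩ := Multiset.exists_cons_of_mem hα
  have hαT := hsT α (Multiset.mem_cons_self α s')
  rw [Multiset.sum_cons] at hsum
  -- the remaining roots sum to `-α`, so one of them makes an obtuse angle with `α`
  have hobtuse : ⟪α, s'.sum⟫ < 0 := by
    rw [eq_neg_of_add_eq_zero_right hsum, inner_neg_right, neg_neg_iff_pos]
    exact hΦ.inner_self_pos (hT.1 hαT)
  obtain ⟨β, hβ, hαβ⟩ := Multiset.exists_inner_neg_of_inner_sum_neg hobtuse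
  have hβT := hsT β (Multiset.mem_cons_of_mem hβ)
  obtain ⟨s'', rfl⟩ := Multiset.exists_cons_of_mem hβ
  rcases hΦ.eq_neg_or_add_mem_of_inner_neg (hT.1 hαT) (hT.1 hβT) hαβ with rfl | hadd
  · exact hspec α hαT hβT
  · have hmerged : ∀ x ∈ (α + β) ::ₘ s'', x ∈ T := by
      simp only [Multiset.mem_cons, forall_eq_or_imp]
      exact ⟨hT.2 α hαT β hβT hadd, fun x hx => hsT x (by simp [hx])⟩
    refine hT.multiset_sum_ne_zero hΦ hspec hmerged Multiset.cons_ne_zero ?_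
    rw [Multiset.sum_cons, add_assoc, ← Multiset.sum_cons, hsum]
termination_by Multiset.card s
decreasing_by subst_vars; simp

lemma exists_multiset_sum_eq_zero_of_subset_sumSet {E : Type*} [AddCommGroup E] {T : Set E}
    (hfin : T.Finite) (hne : T.Nonempty) (h : T ⊆ sumSet T) :
    ∃ s : Multiset E, s ≠ 0 ∧ (∀ x ∈ s, x ∈ T) ∧ s.sum = 0 := by
  have hsplit : ∀ γ ∈ T, ∃ β ∈ T, γ - β ∈ T := fun γ hγ => by
    obtain ⟨-, α, hα, β, hβ, rfl⟩ := h hγ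
    exact ⟨β, hβ, by simpa using hα⟩
  choose! g hgT hsubT using hsplit
  obtain ⟨γ, hγ⟩ := hne
  have hiterT : ∀ n, g^[n] γ ∈ T := fun n => Set.MapsTo.iterate hgT n hγ
  -- the orbit of `γ` under `g` is eventually periodic; the differences along a cycle sum to `0`
  obtain ⟨a, b, hab, hcycle⟩ := hfin.exists_lt_map_eq_of_forall_mem hiterT
  refine ⟨(Finset.Ico a b).val.map fun i => g^[i] γ - g^[i + 1] γ, ?_, ?_, ?_⟩
  · simpa using hab
  · simp only [Multiset.mem_map, Finset.mem_val, forall_exists_index, and_imp]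
    rintro _ i - rfl
    rw [Function.iterate_succ_apply']
    exact hsubT _ (hiterT i)
  · change ∑ i ∈ Finset.Ico a b, (g^[i] γ - g^[i + 1] γ) = 0
    rw [← neg_eq_zero, ← Finset.sum_neg_distrib]
    simp only [neg_sub]
    rw [Finset.sum_Ico_sub (f := fun i => g^[i] γ) hab.le, hcycle, sub_self]

theorem sumSet_ssubset_of_special_closed_general {E : Type*} [NormedAddCommGroup E]
    [InnerProductSpace ℝ E] (Φ T : Set E)
    (hΦ : IsRootSystem Φ) (hT : IsClosedSub Φ T) (hspec : ∀ α ∈ T, -α ∉ T)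
    (hne : T.Nonempty) :
    sumSet T ⊂ T := by
  refine ⟨fun γ hγ => hγ.1, fun hsub => ?_⟩
  obtain ⟨s, hs, hsT, hsum⟩ :=
    exists_multiset_sum_eq_zero_of_subset_sumSet (hΦ.1.subset hT.1) hne hsub
  exact hT.multiset_sum_ne_zero hΦ hspec hsT hs hsum

/-- For a nonempty special closed subset `T`, the set `T + T` is strictly
contained in `T`. -/
theorem sumSet_ssubset_of_special_closed {E : Type*} [NormedAddCommGroup E]
    [InnerProductSpace ℝ E] [FiniteDimensional ℝ E] (Φ T : Set E)
    (hΦ : IsRootSystem Φ) (hT : IsClosedSub Φ T) (hspec : ∀ α ∈ T, -α ∉ T)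
    (hne : T.Nonempty) :
    sumSet T ⊂ T :=
  sumSet_ssubset_of_special_closed_general Φ T hΦ hT hspec hne
end

section
/- Let Φ be a root system in E with a fixed set of positive roots Φ^+, and let T' ⊆ Φ^+ be a closed subset with T' ≠ Φ^+. Then there exists a root γ ∈ Φ^+ with γ ∉ T' such that T' ∪ {γ} is closed. -/
open scoped RealInnerProductSpace

/-!
Let `f` be the functional defining `Φ⁺` and take `γ ∈ Φ⁺ \ T'` with `f γ` maximal. A root of the
form `α + γ` with `α ∈ T' ∪ {γ}` has `f`-value larger than `f γ`, so it is a positive root and, by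
the maximality of `γ`, it lies in `T'`.
-/

theorem Set.Finite.exists_mem_diff_forall_lt_imp_mem {ι β : Type*} [LinearOrder β]
    {S T : Set ι} (hS : S.Finite) (hST : ¬S ⊆ T) (f : ι → β) :
    ∃ γ ∈ S \ T, ∀ δ ∈ S, f γ < f δ → δ ∈ T := by
  obtain ⟨γ, hγ, hmax⟩ := (hS.sdiff (t := T)).exists_maximalFor f _ (Set.sdiff_nonempty.2 hST)
  refine ⟨γ, hγ, fun δ hδS hlt => ?_⟩
  by_contra hδT
  exact (hmax ⟨hδS, hδT⟩ hlt.le).not_gt hlt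

theorem IsClosedSub.union_singleton {E M : Type*} [AddCommGroup E] [AddCommMonoid M]
    [PartialOrder M] [IsOrderedCancelAddMonoid M] {Φ T : Set E} {γ : E} (f : E →+ M)
    (hT : IsClosedSub Φ T) (hγ : γ ∈ Φ) (hTpos : ∀ α ∈ T, 0 < f α) (hγpos : 0 < f γ)
    (hmax : ∀ δ ∈ Φ, f γ < f δ → δ ∈ T) :
    IsClosedSub Φ (T ∪ {γ}) := by
  have hpos : ∀ α ∈ T ∪ {γ}, 0 < f α := by
    rintro α (hα | rfl)
    exacts [hTpos α hα, hγpos]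
  refine ⟨Set.union_subset hT.1 (Set.singleton_subset_iff.2 hγ), ?_⟩
  rintro α hα β hβ hαβ
  rcases hα with hα | rfl
  · rcases hβ with hβ | rfl
    · exact Or.inl (hT.2 α hα β hβ hαβ)
    · refine Or.inl (hmax _ hαβ ?_)
      simpa only [map_add] using lt_add_of_pos_left (f β) (hTpos α hα)
  · refine Or.inl (hmax _ hαβ ?_)
    simpa only [map_add] using lt_add_of_pos_right (f α) (hpos β hβ)

theorem exists_root_insert_closed_general {E : Type*} [NormedAddCommGroup E]
    [InnerProductSpace ℝ E] (Φ Φp T' : Set E)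
    (hΦ : IsRootSystem Φ) (hΦp : IsPositiveSystem Φ Φp)
    (hT' : IsClosedSub Φ T') (hsub : T' ⊆ Φp) (hne : T' ≠ Φp) :
    ∃ γ ∈ Φp, γ ∉ T' ∧ IsClosedSub Φ (T' ∪ {γ}) := by
  obtain ⟨f, -, rfl⟩ := hΦp
  have hnot : ¬{α ∈ Φ | 0 < f α} ⊆ T' := fun h => hne (hsub.antisymm h)
  obtain ⟨γ, ⟨hγp, hγT⟩, hmax⟩ := (hΦ.1.sep _).exists_mem_diff_forall_lt_imp_mem hnot f
  refine ⟨γ, hγp, hγT, hT'.union_singleton f.toAddMonoidHom hγp.1 (fun α hα => (hsub hα).2)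
    hγp.2 fun δ hδ hlt => hmax δ ⟨hδ, hγp.2.trans hlt⟩ hlt⟩

/-- A closed subset `T' ⊊ Φ⁺` can be enlarged inside `Φ⁺` by one root while
staying closed. -/
theorem exists_root_insert_closed {E : Type*} [NormedAddCommGroup E]
    [InnerProductSpace ℝ E] [FiniteDimensional ℝ E] (Φ Φp T' : Set E)
    (hΦ : IsRootSystem Φ) (hΦp : IsPositiveSystem Φ Φp)
    (hT' : IsClosedSub Φ T') (hsub : T' ⊆ Φp) (hne : T' ≠ Φp) :
    ∃ γ ∈ Φp, γ ∉ T' ∧ IsClosedSub Φ (T' ∪ {γ}) :=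
  exists_root_insert_closed_general Φ Φp T' hΦ hΦp hT' hsub hne
end

section
/- Let Φ be a root system in E, let T ⊆ Φ be a special closed subset, and let α ∈ Φ with α ∉ T and −α ∉ T. Then there exists a closed subset S ⊆ Φ with special part S^u = T and with α, −α ∈ S^r if and only if T ∪ {α, −α} is closed. -/
open scoped RealInnerProductSpace

/-- For a special closed `T` and `α ∈ Φ` with `±α ∉ T`, there is a closed
`S` with `S^u = T` and `α, -α ∈ S^r` iff `T ∪ {α, -α}` is closed. -/
theorem exists_closed_with_specPart_iff {E : Type*} [NormedAddCommGroup E]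
    [InnerProductSpace ℝ E] [FiniteDimensional ℝ E] (Φ T : Set E)
    (hΦ : IsRootSystem Φ) (hT : IsClosedSub Φ T) (hspec : ∀ α ∈ T, -α ∉ T)
    (α : E) (hαΦ : α ∈ Φ) (hα : α ∉ T) (hnα : -α ∉ T) :
    (∃ S : Set E, IsClosedSub Φ S ∧ specPart S = T ∧ α ∈ symmPart S ∧ -α ∈ symmPart S) ↔
      IsClosedSub Φ (T ∪ {α, -α}) := by
  obtain ⟨hfin, hspan, h0, hred, hrefl, hint⟩ := hΦ
  have hne : ∀ β ∈ Φ, β ≠ (0 : E) := fun β hβ h => h0 (h ▸ hβ)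
  have hneg : ∀ β ∈ Φ, -β ∈ Φ := by
    intro β hβ
    have hip : (⟪β, β⟫ : ℝ) ≠ 0 := inner_self_ne_zero.mpr (hne β hβ)
    have h2 : 2 * (⟪β, β⟫ : ℝ) / (⟪β, β⟫ : ℝ) = 2 := by field_simp
    have := hrefl β hβ β hβ
    unfold reflectRoot at this
    rw [h2] at this
    have heq : β - (2 : ℝ) • β = -β := by
      rw [two_smul]; abel
    rwa [heq] at this
  have hαα : α + α ∉ Φ := by
    intro h
    have h2 : (2 : ℝ) • α ∈ Φ := by rw [two_smul]; exact h
    rcases hred α hαΦ 2 h2 with h' | h'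
    · have : ((2 : ℝ) - 1) • α = 0 := by
        rw [sub_smul, one_smul, h', sub_self]
      rcases smul_eq_zero.mp this with h'' | h''
      · norm_num at h''
      · exact hne α hαΦ h''
    · have : ((2 : ℝ) + 1) • α = 0 := by
        rw [add_smul, one_smul, h', neg_add_cancel]
      rcases smul_eq_zero.mp this with h'' | h''
      · norm_num at h''
      · exact hne α hαΦ h''
  have hnαnα : -α + -α ∉ Φ := by
    intro h
    have : -(-α + -α) ∈ Φ := hneg _ h
    rw [show -(-α + -α) = α + α by abel] at this
    exact hαα this
  constructor
  · rintro ⟨S, hScl, hsp, hαS, hnαS⟩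
    have hTS : T ⊆ S := by
      intro β hβ; rw [← hsp] at hβ; exact hβ.1
    have hαmem : α ∈ S := hαS.1
    have hnαmem : -α ∈ S := hnαS.1
    have key : ∀ δ, δ ∈ S → δ ∈ Φ → ∀ β ∈ T, β + δ ∈ Φ → β + δ ∈ T := by
      intro δ hδS hδΦ β hβ hsum
      have hsumS : β + δ ∈ S := hScl.2 β (hTS hβ) δ hδS hsum
      by_contra hnot
      have hnsum : -(β + δ) ∈ S := by
        by_contra hns
        exact hnot (hsp ▸ (⟨hsumS, hns⟩ : β + δ ∈ specPart S))
      have hnβΦ : -β ∈ Φ := hneg β (hT.1 hβ)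
      have : -(β + δ) + δ ∈ S := by
        apply hScl.2 _ hnsum _ hδS
        rw [show -(β + δ) + δ = -β by abel]
        exact hnβΦ
      rw [show -(β + δ) + δ = -β by abel] at this
      have hβspec : β ∈ specPart S := hsp ▸ hβ
      exact hβspec.2 this
    constructor
    · intro β hβ
      rcases hβ with hβ | hβ
      · exact hT.1 hβ
      · rcases hβ with hβ | hβ
        · exact hβ ▸ hαΦ
        · rw [Set.mem_singleton_iff] at hβ
          exact hβ ▸ hneg α hαΦ
    · intro β hβ γ hγ hsum
      have hmem : ∀ x, x ∈ T ∪ ({α, -α} : Set E) → x ∈ T ∨ x = α ∨ x = -α := by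
        intro x hx
        rcases hx with hx | hx
        · exact Or.inl hx
        · rcases hx with hx | hx
          · exact Or.inr (Or.inl hx)
          · exact Or.inr (Or.inr (Set.mem_singleton_iff.mp hx))
      have hδS : ∀ x, x = α ∨ x = -α → x ∈ S ∧ x ∈ Φ := by
        rintro x (rfl | rfl)
        · exact ⟨hαmem, hαΦ⟩
        · exact ⟨hnαmem, hneg α hαΦ⟩
      rcases hmem β hβ with hβT | hβa
      · rcases hmem γ hγ with hγT | hγa
        · exact Or.inl (hT.2 β hβT γ hγT hsum)
        · obtain ⟨hγS, hγΦ⟩ := hδS γ hγa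
          exact Or.inl (key γ hγS hγΦ β hβT hsum)
      · rcases hmem γ hγ with hγT | hγa
        · obtain ⟨hβS, hβΦ⟩ := hδS β hβa
          have := key β hβS hβΦ γ hγT (by rwa [add_comm] at hsum)
          rw [add_comm] at this
          exact Or.inl this
        · exfalso
          rcases hβa with rfl | rfl <;> rcases hγa with rfl | rfl
          · exact hαα hsum
          · rw [add_neg_cancel] at hsum; exact h0 hsum
          · rw [neg_add_cancel] at hsum; exact h0 hsum
          · exact hnαnα hsum
  · intro hcl
    refine ⟨T ∪ {α, -α}, hcl, ?_, ?_, ?_⟩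
    · ext β
      constructor
      · rintro ⟨hβ, hnβ⟩
        rcases hβ with hβ | hβ
        · exact hβ
        · exfalso
          rcases hβ with rfl | hβ
          · exact hnβ (Or.inr (Or.inr rfl))
          · rw [Set.mem_singleton_iff] at hβ
            subst hβ
            exact hnβ (Or.inr (Or.inl (neg_neg α)))
      · intro hβ
        refine ⟨Or.inl hβ, ?_⟩
        rintro (h | h | h)
        · exact hspec β hβ h
        · exact hnα (show -α ∈ T by rw [← h, neg_neg]; exact hβ)
        · rw [Set.mem_singleton_iff] at h
          exact hα (show α ∈ T by rw [← neg_neg α, ← h, neg_neg]; exact hβ)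
    · exact ⟨Or.inr (Or.inl rfl), Or.inr (Or.inr rfl)⟩
    · refine ⟨Or.inr (Or.inr rfl), ?_⟩
      rw [neg_neg]
      exact Or.inr (Or.inl rfl)
end

section
/- Let Φ be a root system in E and let α, β, γ ∈ Φ be roots such that α + β ∈ Φ, α + β + γ ∈ Φ, γ ≠ −α, and γ ≠ −β. Then at least one of α + γ and β + γ is a root, i.e., α + γ ∈ Φ or β + γ ∈ Φ. -/
open scoped RealInnerProductSpace

section Aux

variable {E : Type*} [NormedAddCommGroup E] [InnerProductSpace ℝ E]

lemma rs_ne_zero {Φ : Set E} (hΦ : IsRootSystem Φ) {α : E} (hα : α ∈ Φ) : α ≠ 0 := by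
  rintro rfl; exact hΦ.2.2.1 hα

lemma rs_inner_self_pos {Φ : Set E} (hΦ : IsRootSystem Φ) {α : E} (hα : α ∈ Φ) :
    0 < ⟪α, α⟫ :=
  lt_of_le_of_ne real_inner_self_nonneg
    (Ne.symm (inner_self_ne_zero.mpr (rs_ne_zero hΦ hα)))

lemma rs_neg_mem {Φ : Set E} (hΦ : IsRootSystem Φ) {α : E} (hα : α ∈ Φ) : -α ∈ Φ := by
  have h := hΦ.2.2.2.2.1 α hα α hα
  have hpos := rs_inner_self_pos hΦ hα
  have hr : reflectRoot α α = -α := by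
    unfold reflectRoot
    rw [mul_div_assoc, div_self hpos.ne', mul_one, two_smul]
    abel
  rwa [hr] at h

/-- Equality in Cauchy–Schwarz forces `α = β` or `α = -β` for roots. -/
lemma rs_dep {Φ : Set E} (hΦ : IsRootSystem Φ) {α β : E} (hα : α ∈ Φ) (hβ : β ∈ Φ)
    (heq : ⟪α, β⟫ * ⟪α, β⟫ = ⟪α, α⟫ * ⟪β, β⟫) : α = β ∨ α = -β := by
  have hb := rs_inner_self_pos hΦ hβ
  have hv : ⟪β, β⟫ • α - ⟪α, β⟫ • β = 0 := by
    rw [← inner_self_eq_zero (𝕜 := ℝ)]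
    simp only [inner_sub_left, inner_sub_right, real_inner_smul_left, real_inner_smul_right,
      real_inner_comm β α]
    rw [real_inner_comm α β]
    linear_combination (-⟪β, β⟫ : ℝ) * heq
  have hα' : α = (⟪α, β⟫ / ⟪β, β⟫) • β := by
    have := sub_eq_zero.mp hv
    rw [div_eq_mul_inv, mul_comm, mul_smul]
    rw [← this, smul_smul, inv_mul_cancel₀ hb.ne', one_smul]
  have := hΦ.2.2.2.1 β hβ (⟪α, β⟫ / ⟪β, β⟫) (by rw [← hα']; exact hα)
  rw [← hα'] at this
  exact this

/-- If `α, β` are roots, `α ≠ β` and `⟪α, β⟫ > 0`, then `α - β` is a root. -/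
lemma rs_sub_mem {Φ : Set E} (hΦ : IsRootSystem Φ) {α β : E} (hα : α ∈ Φ) (hβ : β ∈ Φ)
    (hne : α ≠ β) (hpos : 0 < ⟪α, β⟫) : α - β ∈ Φ := by
  have ha := rs_inner_self_pos hΦ hα
  have hb := rs_inner_self_pos hΦ hβ
  obtain ⟨n, hn⟩ := hΦ.2.2.2.2.2 β hβ α hα   -- 2⟪α,β⟫/⟪β,β⟫ = n
  obtain ⟨m, hm⟩ := hΦ.2.2.2.2.2 α hα β hβ   -- 2⟪β,α⟫/⟪α,α⟫ = m
  have hnpos : (0:ℝ) < n := by rw [← hn]; positivity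
  have hmpos : (0:ℝ) < m := by
    rw [← hm]; rw [real_inner_comm]; positivity
  -- strict Cauchy–Schwarz
  have hcs : ⟪α, β⟫ * ⟪α, β⟫ ≤ ⟪α, α⟫ * ⟪β, β⟫ := real_inner_mul_inner_self_le α β
  have hstrict : ⟪α, β⟫ * ⟪α, β⟫ < ⟪α, α⟫ * ⟪β, β⟫ := by
    rcases lt_or_eq_of_le hcs with h | h
    · exact h
    · rcases rs_dep hΦ hα hβ h with h' | h'
      · exact absurd h' hne
      · rw [h'] at hpos
        rw [inner_neg_left] at hpos
        linarith
  have hprod : (n : ℝ) * m < 4 := by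
    have h1 : (n : ℝ) = 2 * ⟪α, β⟫ / ⟪β, β⟫ := hn.symm
    have h2 : (m : ℝ) = 2 * ⟪β, α⟫ / ⟪α, α⟫ := hm.symm
    rw [h1, h2, real_inner_comm β α, div_mul_div_comm]
    rw [div_lt_iff₀ (by positivity)]
    nlinarith [hstrict, real_inner_comm α β]
  have hn1 : 1 ≤ n := by
    have h0 : 0 < n := by exact_mod_cast hnpos
    omega
  have hm1 : 1 ≤ m := by
    have h0 : 0 < m := by exact_mod_cast hmpos
    omega
  have hnm : n * m ≤ 3 := by
    have h4 : (↑(n * m) : ℝ) < 4 := by push_cast; exact hprod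
    have : n * m < 4 := by exact_mod_cast h4
    omega
  have hone : n = 1 ∨ m = 1 := by
    by_contra hc
    push_neg at hc
    have : 2 ≤ n := lt_of_le_of_ne hn1 (Ne.symm hc.1)
    have : 2 ≤ m := lt_of_le_of_ne hm1 (Ne.symm hc.2)
    nlinarith
  rcases hone with h | h
  · -- 2⟪α,β⟫/⟪β,β⟫ = 1, so reflectRoot β α = α - β
    have := hΦ.2.2.2.2.1 β hβ α hα
    have hr : reflectRoot β α = α - β := by
      unfold reflectRoot
      rw [hn, h]
      push_cast
      rw [one_smul]
    rwa [hr] at this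
  · -- 2⟪β,α⟫/⟪α,α⟫ = 1, so reflectRoot α β = β - α
    have := hΦ.2.2.2.2.1 α hα β hβ
    have hr : reflectRoot α β = β - α := by
      unfold reflectRoot
      rw [hm, h]
      push_cast
      rw [one_smul]
    rw [hr] at this
    have := rs_neg_mem hΦ this
    rwa [neg_sub] at this

/-- If `α + β` is not a root and `β ≠ -α`, then `⟪α, β⟫ ≥ 0`. -/
lemma rs_inner_nonneg {Φ : Set E} (hΦ : IsRootSystem Φ) {α β : E} (hα : α ∈ Φ) (hβ : β ∈ Φ)
    (hne : β ≠ -α) (hns : α + β ∉ Φ) : 0 ≤ ⟪α, β⟫ := by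
  by_contra hc
  push_neg at hc
  have hmem : α - (-β) ∈ Φ := by
    apply rs_sub_mem hΦ hα (rs_neg_mem hΦ hβ)
    · intro h; apply hne; rw [h]; simp
    · rw [inner_neg_right]; linarith
  rw [sub_neg_eq_add] at hmem
  exact hns hmem

end Aux

/-- If `α, β, γ ∈ Φ`, `α + β ∈ Φ`, `α + β + γ ∈ Φ`, `γ ≠ -α` and
`γ ≠ -β`, then `α + γ ∈ Φ` or `β + γ ∈ Φ`. -/
theorem root_sum_alternative {E : Type*} [NormedAddCommGroup E]
    [InnerProductSpace ℝ E] [FiniteDimensional ℝ E] (Φ : Set E)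
    (hΦ : IsRootSystem Φ) (α β γ : E) (hα : α ∈ Φ) (hβ : β ∈ Φ) (hγ : γ ∈ Φ)
    (hab : α + β ∈ Φ) (habc : α + β + γ ∈ Φ) (h1 : γ ≠ -α) (h2 : γ ≠ -β) :
    α + γ ∈ Φ ∨ β + γ ∈ Φ := by
  by_contra hc
  push_neg at hc
  obtain ⟨hac, hbc⟩ := hc
  have hag : 0 ≤ ⟪α, γ⟫ := rs_inner_nonneg hΦ hα hγ h1 hac
  have hbg : 0 ≤ ⟪β, γ⟫ := rs_inner_nonneg hΦ hβ hγ h2 hbc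
  have hab0 : α + β ≠ 0 := rs_ne_zero hΦ hab
  set δ := α + β + γ with hδ
  -- Case ⟪δ, α⟫ > 0 : then δ - α = β + γ ∈ Φ, contradiction
  by_cases hda : 0 < ⟪δ, α⟫
  · have hdne : δ ≠ α := by
      intro h
      apply h2
      have hbc0 : β + γ = 0 := by
        have h'' : α + β + γ = α := by rw [← hδ]; exact h
        have h' : α + β + γ - α = 0 := by rw [h'']; simp
        rwa [show α + β + γ - α = β + γ from by abel] at h'
      rw [← neg_eq_of_add_eq_zero_right hbc0]
    have := rs_sub_mem hΦ habc hα hdne hda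
    have heq : δ - α = β + γ := by rw [hδ]; abel
    rw [heq] at this
    exact hbc this
  by_cases hdb : 0 < ⟪δ, β⟫
  · have hdne : δ ≠ β := by
      intro h
      apply h1
      have hac0 : α + γ = 0 := by
        have h'' : α + β + γ = β := by rw [← hδ]; exact h
        have h' : α + β + γ - β = 0 := by rw [h'']; simp
        rwa [show α + β + γ - β = α + γ from by abel] at h'
      rw [← neg_eq_of_add_eq_zero_right hac0]
    have := rs_sub_mem hΦ habc hβ hdne hdb
    have heq : δ - β = α + γ := by rw [hδ]; abel
    rw [heq] at this
    exact hac this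
  push_neg at hda hdb
  have ha := rs_inner_self_pos hΦ hα
  have hb := rs_inner_self_pos hΦ hβ
  have hexp1 : ⟪δ, α⟫ = ⟪α, α⟫ + ⟪α, β⟫ + ⟪α, γ⟫ := by
    rw [hδ]
    simp only [inner_add_left]
    rw [real_inner_comm β α, real_inner_comm γ α]
  have hexp2 : ⟪δ, β⟫ = ⟪α, β⟫ + ⟪β, β⟫ + ⟪β, γ⟫ := by
    rw [hδ]
    simp only [inner_add_left]
    rw [real_inner_comm γ β]
  have h3 : ⟪α, β⟫ ≤ -⟪α, α⟫ := by rw [hexp1] at hda; linarith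
  have h4 : ⟪α, β⟫ ≤ -⟪β, β⟫ := by rw [hexp2] at hdb; linarith
  have hcs : ⟪α, β⟫ * ⟪α, β⟫ ≤ ⟪α, α⟫ * ⟪β, β⟫ := real_inner_mul_inner_self_le α β
  have heq : ⟪α, β⟫ * ⟪α, β⟫ = ⟪α, α⟫ * ⟪β, β⟫ := by nlinarith
  rcases rs_dep hΦ hα hβ heq with h | h
  · rw [h] at h4
    linarith
  · apply hab0
    rw [h]; abel
end

section
/- Let n ≥ 1 and let Φ = {e_i − e_j : i, j ∈ Fin n, i ≠ j} ⊆ ℝ^n (the root system of type A_{n−1}), where e_i denotes the i-th standard basis vector. For any topology τ on Fin n, the set S_τ = {e_i − e_j : i ≠ j and i lies in the τ-closure of {j}} is a closed subset of Φ, i.e., for all α, β ∈ S_τ with α + β ∈ Φ one has α + β ∈ S_τ. -/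
/-- The root system of type `A_{n-1}` in `ℝ^n`: the vectors `e_i - e_j` for `i ≠ j`. -/
def typeARoots (n : ℕ) : Set (Fin n → ℝ) :=
  {v | ∃ i j : Fin n, i ≠ j ∧ v = Pi.single i (1 : ℝ) - Pi.single j (1 : ℝ)}

/-- The subset of the root system of type `A_{n-1}` associated to a topology `τ` on
`Fin n`: the roots `e_i - e_j` with `i ≠ j` and `i` in the `τ`-closure of `{j}`. -/
def topSet (n : ℕ) (τ : TopologicalSpace (Fin n)) : Set (Fin n → ℝ) :=
  {v | ∃ i j : Fin n, i ≠ j ∧ i ∈ @closure (Fin n) τ {j} ∧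
    v = Pi.single i (1 : ℝ) - Pi.single j (1 : ℝ)}

/-- For any topology `τ` on `Fin n`, the set `S_τ` is a closed subset of
the root system of type `A_{n-1}`. -/
theorem topSet_isClosedSubset (n : ℕ) (hn : 1 ≤ n) (τ : TopologicalSpace (Fin n)) :
    ∀ α ∈ topSet n τ, ∀ β ∈ topSet n τ, α + β ∈ typeARoots n → α + β ∈ topSet n τ := by
  rintro α ⟨i, j, hij, hcl1, rfl⟩ β ⟨k, l, hkl, hcl2, rfl⟩ ⟨p, q, hpq, h⟩
  by_cases hjk : j = k
  · subst hjk
    have hil : i ≠ l := by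
      rintro rfl
      have hp := congrFun h p
      simp [Pi.single_apply, hpq] at hp
    refine ⟨i, l, hil, ?_, by abel⟩
    exact closure_minimal (Set.singleton_subset_iff.2 hcl2) isClosed_closure hcl1
  · by_cases hil : i = l
    · subst hil
      refine ⟨k, j, fun hkj => hjk hkj.symm, ?_, by abel⟩
      exact closure_minimal (Set.singleton_subset_iff.2 hcl1) isClosed_closure hcl2
    · exfalso
      -- all four of i, j, k, l pairwise distinct in the relevant ways
      have hki : k ≠ i := by
        rintro rfl
        have := congrFun h k
        simp [Pi.single_apply, hij, Ne.symm hkl] at this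
        split_ifs at this <;> linarith
      have hlj : l ≠ j := by
        rintro rfl
        have := congrFun h l
        simp [Pi.single_apply, hij, hkl] at this
        split_ifs at this <;> linarith
      have hi := congrFun h i
      have hk := congrFun h k
      simp [Pi.single_apply, hij, hil, Ne.symm hki] at hi
      simp [Pi.single_apply, hki, hkl, Ne.symm hjk] at hk
      -- hi : 1 = (if p = i then 1 else 0) - (if q = i then 1 else 0)
      -- hk : 1 = ...
      have hpi : p = i := by
        rcases eq_or_ne i p with h1 | h1
        · exact h1.symm
        · simp [h1] at hi; split_ifs at hi <;> linarith
      have hpk : p = k := by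
        rcases eq_or_ne k p with h1 | h1
        · exact h1.symm
        · simp [h1] at hk; split_ifs at hk <;> linarith
      exact hki (hpk ▸ hpi ▸ rfl)
end

section
/- Let n ≥ 1 and let Φ = {e_i − e_j : i, j ∈ Fin n, i ≠ j} ⊆ ℝ^n (the root system of type A_{n−1}). The map sending a topology τ on Fin n to the set S_τ = {e_i − e_j : i ≠ j and i lies in the τ-closure of {j}} is a bijection from the set of topologies on Fin n onto the set of closed subsets of Φ. -/
/-! The relation `i ∈ closure {j}` is the specialization preorder `j ⤳ i`. A topology on a finite
set is determined by its specialization preorder (finite spaces are Alexandrov-discrete), and every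
preorder is the specialization preorder of its upper-set topology. On the root side,
`(e_i - e_j) + (e_k - e_l)` is a root only when `j = k` or `i = l`, so a set `S` of roots is closed
iff the relation `e_i - e_j ∈ S` is transitive off the diagonal, i.e. iff its reflexive closure is
a preorder. -/

section Roots

variable {ι : Type*} [DecidableEq ι] {i j k l x : ι}

def typeARoot (i j : ι) : ι → ℝ := Pi.single i 1 - Pi.single j 1

lemma typeARoot_apply (i j x : ι) :
    typeARoot i j x = (if x = i then 1 else 0) - (if x = j then 1 else 0) := by
  simp [typeARoot, Pi.single_apply]

lemma typeARoot_apply_left (h : i ≠ j) : typeARoot i j i = 1 := by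
  simp [typeARoot_apply, h]

lemma typeARoot_apply_right (h : i ≠ j) : typeARoot i j j = -1 := by
  simp [typeARoot_apply, h.symm]

lemma typeARoot_apply_of_ne (hi : x ≠ i) (hj : x ≠ j) : typeARoot i j x = 0 := by
  simp [typeARoot_apply, hi, hj]

lemma typeARoot_apply_le_one (i j x : ι) : typeARoot i j x ≤ 1 := by
  rw [typeARoot_apply]
  split_ifs <;> norm_num

lemma eq_left_of_typeARoot_apply_eq_one (h : typeARoot i j x = 1) : x = i := by
  by_contra hx
  rw [typeARoot_apply, if_neg hx] at h
  split_ifs at h <;> norm_num at h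

lemma eq_right_of_typeARoot_apply_eq_neg_one (h : typeARoot i j x = -1) : x = j := by
  by_contra hx
  rw [typeARoot_apply, if_neg hx] at h
  split_ifs at h <;> norm_num at h

lemma typeARoot_inj (hij : i ≠ j) : typeARoot i j = typeARoot k l ↔ i = k ∧ j = l := by
  refine ⟨fun h => ⟨?_, ?_⟩, fun ⟨hik, hjl⟩ => hik ▸ hjl ▸ rfl⟩
  · exact eq_left_of_typeARoot_apply_eq_one (congrFun h i ▸ typeARoot_apply_left hij)
  · exact eq_right_of_typeARoot_apply_eq_neg_one (congrFun h j ▸ typeARoot_apply_right hij)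

end Roots

section TypeARoots

variable {n : ℕ} {i j k l : Fin n}

lemma mem_typeARoots_iff {v : Fin n → ℝ} :
    v ∈ typeARoots n ↔ ∃ i j, i ≠ j ∧ v = typeARoot i j :=
  Iff.rfl

lemma typeARoot_mem_typeARoots_iff : typeARoot i j ∈ typeARoots n ↔ i ≠ j := by
  refine ⟨?_, fun hij => ⟨i, j, hij, rfl⟩⟩
  rintro ⟨a, b, hab, h : typeARoot i j = typeARoot a b⟩ rfl
  obtain ⟨rfl, rfl⟩ := (typeARoot_inj hab).1 h.symm
  exact hab rfl

lemma typeARoot_add_typeARoot_notMem (hij : i ≠ j) (hkl : k ≠ l) (hjk : j ≠ k) (hil : i ≠ l) :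
    typeARoot i j + typeARoot k l ∉ typeARoots n := by
  rintro ⟨a, b, -, h : _ = typeARoot a b⟩
  have hi := congrFun h i
  have hk := congrFun h k
  rw [Pi.add_apply, typeARoot_apply_left hij] at hi
  rw [Pi.add_apply, typeARoot_apply_left hkl] at hk
  by_cases hik : i = k
  · subst hik
    have := typeARoot_apply_le_one a b i
    rw [← hi, typeARoot_apply_left hkl] at this
    norm_num at this
  · rw [typeARoot_apply_of_ne hik hil, add_zero] at hi
    rw [typeARoot_apply_of_ne (Ne.symm hik) hjk.symm, zero_add] at hk
    exact hik ((eq_left_of_typeARoot_apply_eq_one hi.symm).trans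
      (eq_left_of_typeARoot_apply_eq_one hk.symm).symm)

lemma forall_add_mem_iff_typeARoot_trans {S : Set (Fin n → ℝ)} (hS : S ⊆ typeARoots n) :
    (∀ α ∈ S, ∀ β ∈ S, α + β ∈ typeARoots n → α + β ∈ S) ↔
      ∀ i j k : Fin n, typeARoot i j ∈ S → typeARoot j k ∈ S → i ≠ k → typeARoot i k ∈ S := by
  constructor
  · intro hclosed i j k hij hjk hik
    have hsum : typeARoot i j + typeARoot j k = typeARoot i k := sub_add_sub_cancel _ _ _
    exact hsum ▸ hclosed _ hij _ hjk (hsum ▸ typeARoot_mem_typeARoots_iff.2 hik)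
  · intro htrans α hα β hβ hαβ
    obtain ⟨i, j, hij, rfl⟩ := mem_typeARoots_iff.1 (hS hα)
    obtain ⟨k, l, hkl, rfl⟩ := mem_typeARoots_iff.1 (hS hβ)
    by_cases hjk : j = k
    · subst hjk
      have hsum : typeARoot i j + typeARoot j l = typeARoot i l := sub_add_sub_cancel _ _ _
      rw [hsum] at hαβ ⊢
      exact htrans i j l hα hβ (typeARoot_mem_typeARoots_iff.1 hαβ)
    by_cases hil : i = l
    · subst hil
      have hsum : typeARoot i j + typeARoot k i = typeARoot k j :=
        (add_comm _ _).trans (sub_add_sub_cancel _ _ _)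
      rw [hsum] at hαβ ⊢
      exact htrans k i j hβ hα (typeARoot_mem_typeARoots_iff.1 hαβ)
    exact absurd hαβ (typeARoot_add_typeARoot_notMem hij hkl hjk hil)

end TypeARoots

lemma TopologicalSpace.ext_specializes {X : Type*} {t₁ t₂ : TopologicalSpace X}
    [@AlexandrovDiscrete X t₁] [@AlexandrovDiscrete X t₂]
    (h : ∀ x y : X, @Specializes X t₁ x y ↔ @Specializes X t₂ x y) : t₁ = t₂ := by
  ext s
  rw [@isOpen_iff_forall_specializes _ t₁, @isOpen_iff_forall_specializes _ t₂]
  simp only [h]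

abbrev Relation.reflGenPreorder {α : Type*} (r : α → α → Prop)
    (hr : ∀ a b c, r a b → r b c → a ≠ c → r a c) : Preorder α where
  le := Relation.ReflGen r
  le_refl _ := .refl
  le_trans a b c hab hbc := by
    rcases hab with _ | hab
    · exact hbc
    rcases hbc with _ | hbc
    · exact .single hab
    by_cases hac : a = c
    · exact hac ▸ .refl
    · exact .single (hr a b c hab hbc hac)

section TopSet

variable {n : ℕ} [τ : TopologicalSpace (Fin n)] {i j k : Fin n}

lemma mem_topSet_iff {v : Fin n → ℝ} :
    v ∈ topSet n τ ↔ ∃ i j, i ≠ j ∧ j ⤳ i ∧ v = typeARoot i j := by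
  simp only [topSet, specializes_iff_mem_closure]
  rfl

lemma typeARoot_mem_topSet_iff : typeARoot i j ∈ topSet n τ ↔ i ≠ j ∧ j ⤳ i := by
  refine mem_topSet_iff.trans ⟨?_, fun ⟨hij, hji⟩ => ⟨i, j, hij, hji, rfl⟩⟩
  rintro ⟨a, b, hab, hba, h⟩
  obtain ⟨rfl, rfl⟩ := (typeARoot_inj hab).1 h.symm
  exact ⟨hab, hba⟩

lemma topSet_subset_typeARoots : topSet n τ ⊆ typeARoots n := by
  rintro v ⟨i, j, hij, -, rfl⟩
  exact ⟨i, j, hij, rfl⟩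

lemma typeARoot_mem_topSet_trans (hij : typeARoot i j ∈ topSet n τ)
    (hjk : typeARoot j k ∈ topSet n τ) (hik : i ≠ k) : typeARoot i k ∈ topSet n τ :=
  typeARoot_mem_topSet_iff.2
    ⟨hik, (typeARoot_mem_topSet_iff.1 hjk).2.trans (typeARoot_mem_topSet_iff.1 hij).2⟩

end TopSet

lemma topSet_injective (n : ℕ) : Function.Injective (topSet n) := by
  intro τ₁ τ₂ h
  refine TopologicalSpace.ext_specializes fun x y => ?_
  by_cases hxy : y = x
  · subst hxy
    exact iff_of_true (@specializes_refl _ τ₁ y) (@specializes_refl _ τ₂ y)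
  · have := congrArg (typeARoot y x ∈ ·) h
    simpa [@typeARoot_mem_topSet_iff _ τ₁, @typeARoot_mem_topSet_iff _ τ₂, hxy] using this

lemma topSet_upperSet {n : ℕ} {S : Set (Fin n → ℝ)} (hS : S ⊆ typeARoots n)
    (htrans : ∀ i j k : Fin n, typeARoot i j ∈ S → typeARoot j k ∈ S → i ≠ k →
      typeARoot i k ∈ S) :
    topSet n (@Topology.upperSet _ (Relation.reflGenPreorder _ htrans)) = S := by
  let := Relation.reflGenPreorder _ htrans
  let : TopologicalSpace (Fin n) := Topology.upperSet (Fin n)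
  have : Topology.IsUpperSet (Fin n) := ⟨rfl⟩
  ext v
  rw [mem_topSet_iff]
  constructor
  · rintro ⟨i, j, hij, hji, rfl⟩
    rcases Topology.IsUpperSet.specializes_iff_le.1 hji with _ | hv
    · exact absurd rfl hij
    · exact hv
  · intro hv
    obtain ⟨i, j, hij, rfl⟩ := mem_typeARoots_iff.1 (hS hv)
    exact ⟨i, j, hij, Topology.IsUpperSet.specializes_iff_le.2 (Relation.ReflGen.single hv), rfl⟩

theorem topSet_bijOn_general (n : ℕ) :
    Set.BijOn (fun τ : TopologicalSpace (Fin n) => topSet n τ) Set.univ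
      {S : Set (Fin n → ℝ) | S ⊆ typeARoots n ∧
        ∀ α ∈ S, ∀ β ∈ S, α + β ∈ typeARoots n → α + β ∈ S} := by
  refine ⟨fun τ _ => ?_, (topSet_injective n).injOn, fun S ⟨hS, hclosed⟩ => ?_⟩
  · exact ⟨topSet_subset_typeARoots, (forall_add_mem_iff_typeARoot_trans
      topSet_subset_typeARoots).2 fun _ _ _ => typeARoot_mem_topSet_trans⟩
  · exact ⟨_, trivial, topSet_upperSet hS ((forall_add_mem_iff_typeARoot_trans hS).1 hclosed)⟩

/-- The map `τ ↦ S_τ` is a bijection from the topologies on `Fin n` onto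
the closed subsets of the root system of type `A_{n-1}`. -/
theorem topSet_bijOn (n : ℕ) (hn : 1 ≤ n) :
    Set.BijOn (fun τ : TopologicalSpace (Fin n) => topSet n τ) Set.univ
      {S : Set (Fin n → ℝ) | S ⊆ typeARoots n ∧
        ∀ α ∈ S, ∀ β ∈ S, α + β ∈ typeARoots n → α + β ∈ S} :=
  topSet_bijOn_general n
end

section
/- Let n ≥ 1 and let Φ = {e_i − e_j : i, j ∈ Fin n, i ≠ j} ⊆ ℝ^n (the root system of type A_{n−1}). Two topologies τ and τ' on Fin n are homeomorphic (i.e., there is a permutation π of Fin n with τ' = {π(U) : U ∈ τ}) if and only if there exists a permutation π of Fin n whose induced coordinate-permuting linear map of ℝ^n (sending e_i to e_{π(i)}) maps S_τ onto S_{τ'}, where S_τ = {e_i − e_j : i ≠ j and i lies in the τ-closure of {j}}. -/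
/-- The coordinate-permuting linear map of `ℝ^n` induced by a permutation `π` of `Fin n`;
it sends `e_i` to `e_{π i}`. -/
def permMap (n : ℕ) (π : Equiv.Perm (Fin n)) : (Fin n → ℝ) → (Fin n → ℝ) :=
  fun v j => v (π.symm j)

lemma single_sub_inj {n : ℕ} {i j k l : Fin n} (hij : i ≠ j) (hkl : k ≠ l)
    (h : (Pi.single i 1 - Pi.single j 1 : Fin n → ℝ) = (Pi.single k 1 - Pi.single l 1 : Fin n → ℝ)) :
    i = k ∧ j = l := by
  have hi := congrFun h i
  have hj := congrFun h j
  simp only [Pi.sub_apply, Pi.single_apply] at hi hj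
  split_ifs at hi hj <;> simp_all <;> exact absurd hj (by norm_num)

lemma mem_closure_image' {X Y : Type*} [TopologicalSpace X] [TopologicalSpace Y] {f : X → Y}
    (hf : Continuous f) {i j : X} (h : i ∈ closure {j}) : f i ∈ closure {f j} := by
  have := image_closure_subset_closure_image hf ⟨i, h, rfl⟩
  simpa using this

lemma self_mem_closure {X : Type*} [TopologicalSpace X] (i : X) : i ∈ closure {i} :=
  subset_closure rfl

lemma permMap_single_sub {n : ℕ} (π : Equiv.Perm (Fin n)) (i j : Fin n) :
    permMap n π (Pi.single i (1 : ℝ) - Pi.single j 1) =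
      Pi.single (π i) (1 : ℝ) - Pi.single (π j) 1 := by
  funext a
  simp [permMap, Pi.single_apply, Equiv.symm_apply_eq]

lemma isOpen_iff' {n : ℕ} (τ : TopologicalSpace (Fin n)) (s : Set (Fin n)) :
    @IsOpen _ τ s ↔ ∀ x y : Fin n, y ∈ @closure _ τ {x} → y ∈ s → x ∈ s := by
  letI := τ
  rw [isOpen_iff_forall_specializes]
  simp only [specializes_iff_mem_closure]

lemma opens_eq_of_spec {n : ℕ} (τ τ' : TopologicalSpace (Fin n)) (π : Equiv.Perm (Fin n))
    (h : ∀ i j : Fin n, i ∈ @closure _ τ {j} ↔ π i ∈ @closure _ τ' {π j}) :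
    {V : Set (Fin n) | @IsOpen (Fin n) τ' V} =
      (fun U : Set (Fin n) => π '' U) '' {U : Set (Fin n) | @IsOpen (Fin n) τ U} := by
  ext V
  simp only [Set.mem_setOf_eq, Set.mem_image]
  constructor
  · intro hV
    refine ⟨π ⁻¹' V, ?_, by simp [Set.image_preimage_eq _ π.surjective]⟩
    rw [isOpen_iff']
    intro x y hy hyV
    exact (isOpen_iff' τ' V).1 hV (π x) (π y) ((h y x).1 hy) hyV
  · rintro ⟨U, hU, rfl⟩
    rw [isOpen_iff']
    rintro x y hy ⟨b, hb, rfl⟩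
    refine ⟨π.symm x, ?_, by simp⟩
    have hx : π b ∈ @closure _ τ' {π (π.symm x)} := by simpa using hy
    exact (isOpen_iff' τ U).1 hU (π.symm x) b ((h b (π.symm x)).2 hx) hb

/-- Two topologies on `Fin n` are homeomorphic iff some coordinate
permutation of `ℝ^n` maps `S_τ` onto `S_{τ'}`. -/
theorem homeomorphic_iff_topSet_conjugate (n : ℕ) (hn : 1 ≤ n)
    (τ τ' : TopologicalSpace (Fin n)) :
    (∃ π : Equiv.Perm (Fin n),
        {V : Set (Fin n) | @IsOpen (Fin n) τ' V} =
          (fun U : Set (Fin n) => π '' U) '' {U : Set (Fin n) | @IsOpen (Fin n) τ U}) ↔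
      (∃ π : Equiv.Perm (Fin n), permMap n π '' topSet n τ = topSet n τ') := by
  constructor
  · rintro ⟨π, hπ⟩
    -- π is a homeomorphism from (Fin n, τ) to (Fin n, τ')
    have hopen : ∀ V : Set (Fin n), @IsOpen _ τ' V ↔ @IsOpen _ τ (π ⁻¹' V) := by
      intro V
      constructor
      · intro hV
        have : V ∈ {V : Set (Fin n) | @IsOpen (Fin n) τ' V} := hV
        rw [hπ] at this
        obtain ⟨U, hU, rfl⟩ := this
        simpa [Set.preimage_image_eq _ π.injective] using hU
      · intro hV
        have : π '' (π ⁻¹' V) ∈ (fun U : Set (Fin n) => π '' U) ''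
            {U : Set (Fin n) | @IsOpen (Fin n) τ U} := ⟨_, hV, rfl⟩
        rw [← hπ] at this
        simpa [Set.image_preimage_eq _ π.surjective] using this
    have hcont : @Continuous _ _ τ τ' π := by
      rw [continuous_def]; intro V hV; exact (hopen V).1 hV
    have hcont' : @Continuous _ _ τ' τ π.symm := by
      rw [continuous_def]; intro U hU
      have : @IsOpen _ τ' (π '' U) := by
        rw [hopen, Set.preimage_image_eq _ π.injective]; exact hU
      rwa [Equiv.image_eq_preimage_symm] at this
    have hspec : ∀ i j : Fin n, i ∈ @closure _ τ {j} ↔ π i ∈ @closure _ τ' {π j} := by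
      intro i j
      constructor
      · intro h
        exact @mem_closure_image' _ _ τ τ' π hcont _ _ h
      · intro h
        have := @mem_closure_image' _ _ τ' τ π.symm hcont' _ _ h
        simpa using this
    refine ⟨π, ?_⟩
    ext v
    constructor
    · rintro ⟨w, ⟨i, j, hij, hcl, rfl⟩, rfl⟩
      exact ⟨π i, π j, fun e => hij (π.injective e), (hspec i j).1 hcl,
        permMap_single_sub π i j⟩
    · rintro ⟨k, l, hkl, hcl, rfl⟩
      refine ⟨Pi.single (π.symm k) 1 - Pi.single (π.symm l) 1,
        ⟨π.symm k, π.symm l, fun e => hkl (π.symm.injective e), ?_, rfl⟩, ?_⟩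
      · rw [hspec]; simpa using hcl
      · rw [permMap_single_sub]; simp
  · rintro ⟨π, hπ⟩
    refine ⟨π, opens_eq_of_spec τ τ' π ?_⟩
    intro i j
    by_cases hij : i = j
    · subst hij
      exact iff_of_true (@self_mem_closure _ τ i) (@self_mem_closure _ τ' (π i))
    · constructor
      · intro hcl
        have : permMap n π (Pi.single i 1 - Pi.single j 1) ∈ topSet n τ' := by
          rw [← hπ]; exact ⟨_, ⟨i, j, hij, hcl, rfl⟩, rfl⟩
        rw [permMap_single_sub] at this
        obtain ⟨k, l, hkl, hcl', heq⟩ := this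
        obtain ⟨hk, hl⟩ := single_sub_inj (fun e => hij (π.injective e)) hkl heq
        rwa [hk, hl]
      · intro hcl
        have hne : π i ≠ π j := fun e => hij (π.injective e)
        have : Pi.single (π i) (1 : ℝ) - Pi.single (π j) 1 ∈ topSet n τ' :=
          ⟨π i, π j, hne, hcl, rfl⟩
        rw [← hπ] at this
        obtain ⟨w, ⟨k, l, hkl, hcl', rfl⟩, heq⟩ := this
        rw [permMap_single_sub] at heq
        obtain ⟨hk, hl⟩ := single_sub_inj (fun e => hkl (π.injective e)) hne heq
        rwa [π.injective hk, π.injective hl] at hcl'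
end
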